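/- If R⋄ is smooth, then for every stable C ⊆ Z₁ the set G(C) = {u ∈ Z₁ | ◇|(Γu) ⊆ C} is stable, and the diamond operator and G form a residuated pair on stable sets: for all stable A, C ⊆ Z₁, ⋄A ⊆ C if and only if A ⊆ G(C). -/
import Mathlib


namespace DFML

variable {Z1 Zd : Type*}

/-- Right polar: U' ⊆ Z∂ for U ⊆ Z₁. -/
def pol1 (P : Z1 → Zd → Prop) (U : Set Z1) : Set Zd := {y | ∀ x ∈ U, P x y}

/-- Left polar: V' ⊆ Z₁ for V ⊆ Z∂. -/
def pol2 (P : Z1 → Zd → Prop) (V : Set Zd) : Set Z1 := {x | ∀ y ∈ V, P x y}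

/-- Galois-stable subsets of Z₁. -/
def stab (P : Z1 → Zd → Prop) (A : Set Z1) : Prop := pol2 P (pol1 P A) = A

/-- Galois co-stable subsets of Z∂. -/
def costab (P : Z1 → Zd → Prop) (B : Set Zd) : Prop := pol1 P (pol2 P B) = B

/-- Preorder on Z₁: u ≼ w iff {u}' ⊆ {w}'. -/
def le1 (P : Z1 → Zd → Prop) (u w : Z1) : Prop := pol1 P {u} ⊆ pol1 P {w}

/-- Preorder on Z∂: u ≼ w iff {u}' ⊆ {w}'. -/
def led (P : Z1 → Zd → Prop) (u w : Zd) : Prop := pol2 P {u} ⊆ pol2 P {w}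

/-- Γu ⊆ Z₁. -/
def Gam1 (P : Z1 → Zd → Prop) (u : Z1) : Set Z1 := {w | le1 P u w}

/-- Γv ⊆ Z∂. -/
def Gamd (P : Z1 → Zd → Prop) (v : Zd) : Set Zd := {w | led P v w}

/-- Closure on Z₁: U''. -/
def cl1 (P : Z1 → Zd → Prop) (U : Set Z1) : Set Z1 := pol2 P (pol1 P U)

/-- Closure on Z∂: V''. -/
def cld (P : Z1 → Zd → Prop) (V : Set Zd) : Set Zd := pol1 P (pol2 P V)

/-- Separated polarity: ≼ is antisymmetric on each sort. -/
def separated (P : Z1 → Zd → Prop) : Prop :=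
  (∀ u w : Z1, le1 P u w → le1 P w u → u = w) ∧
  (∀ u w : Zd, led P u w → led P w u → u = w)

/-- Section R⋄x of a relation R⋄ ⊆ Z₁ × Z₁. -/
def diaSec (R : Z1 → Z1 → Prop) (x : Z1) : Set Z1 := {z | R z x}

/-- Galois dual R'⋄ ⊆ Z∂ × Z₁: y R'⋄ x iff y ∈ (R⋄x)'. -/
def diaDual (P : Z1 → Zd → Prop) (R : Z1 → Z1 → Prop) (y : Zd) (x : Z1) : Prop :=
  y ∈ pol1 P (diaSec R x)

/-- Double dual R''⋄ ⊆ Z∂ × Z∂: y R''⋄ v iff v ∈ ({x | y R'⋄ x})'. -/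
def diaDD (P : Z1 → Zd → Prop) (R : Z1 → Z1 → Prop) (y v : Zd) : Prop :=
  v ∈ pol1 P {x | diaDual P R y x}

/-- Image operator ◇|U = ⋃_{x ∈ U} R⋄x. -/
def diaImg (R : Z1 → Z1 → Prop) (U : Set Z1) : Set Z1 := ⋃ x ∈ U, diaSec R x

/-- Diamond operator on stable sets: ⋄A = (◇|A)''. -/
def diaOp (P : Z1 → Zd → Prop) (R : Z1 → Z1 → Prop) (A : Set Z1) : Set Z1 :=
  cl1 P (diaImg R A)

/-- R⋄ is smooth: every section of its Galois dual is stable. -/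
def diaSmooth (P : Z1 → Zd → Prop) (R : Z1 → Z1 → Prop) : Prop :=
  ∀ y : Zd, stab P {x | diaDual P R y x}

/-- Section R□v of a relation R□ ⊆ Z∂ × Z∂. -/
def boxSec (R : Zd → Zd → Prop) (v : Zd) : Set Zd := {w | R w v}

/-- Galois dual R'□ ⊆ Z₁ × Z∂: x R'□ v iff x ∈ (R□v)'. -/
def boxDual (P : Z1 → Zd → Prop) (R : Zd → Zd → Prop) (x : Z1) (v : Zd) : Prop :=
  x ∈ pol2 P (boxSec R v)

/-- Double dual R''□ ⊆ Z₁ × Z₁: x R''□ z iff z ∈ ({v | x R'□ v})'. -/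
def boxDD (P : Z1 → Zd → Prop) (R : Zd → Zd → Prop) (x z : Z1) : Prop :=
  z ∈ pol2 P {v | boxDual P R x v}

/-- Image operator ◇⁻V = ⋃_{v ∈ V} R□v. -/
def boxImg (R : Zd → Zd → Prop) (V : Set Zd) : Set Zd := ⋃ v ∈ V, boxSec R v

/-- Box operator on stable sets: □A = (◇⁻(A'))'. -/
def boxOp (P : Z1 → Zd → Prop) (R : Zd → Zd → Prop) (A : Set Z1) : Set Z1 :=
  pol2 P (boxImg R (pol1 P A))

/-- R□ is smooth: every section of its Galois dual is co-stable. -/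
def boxSmooth (P : Z1 → Zd → Prop) (R : Zd → Zd → Prop) : Prop :=
  ∀ x : Z1, costab P {v | boxDual P R x v}

end DFML

open DFML

section Aux
variable {Z1 Zd : Type*} (P : Z1 → Zd → Prop)

lemma pol1_anti {U V : Set Z1} (h : U ⊆ V) : pol1 P V ⊆ pol1 P U :=
  fun y hy x hx => hy x (h hx)

lemma pol2_anti {U V : Set Zd} (h : U ⊆ V) : pol2 P V ⊆ pol2 P U :=
  fun x hx y hy => hx y (h hy)

lemma subset_cl1 (U : Set Z1) : U ⊆ cl1 P U :=
  fun x hx y hy => hy x hx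

lemma cl1_mono {U V : Set Z1} (h : U ⊆ V) : cl1 P U ⊆ cl1 P V :=
  pol2_anti P (pol1_anti P h)

lemma cl1_min {U C : Set Z1} (hC : stab P C) (h : U ⊆ C) : cl1 P U ⊆ C := by
  have := cl1_mono P h
  rwa [show cl1 P C = C from hC] at this

/-- key characterization: for stable C, ◇|Γu ⊆ C iff ∀ y ∈ C', y R'⋄ u. -/
lemma key {R : Z1 → Z1 → Prop} (hS : diaSmooth P R) {C : Set Z1} (hC : stab P C)
    (u : Z1) :
    diaImg R (Gam1 P u) ⊆ C ↔ ∀ y ∈ pol1 P C, diaDual P R y u := by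
  constructor
  · intro h y hy z hz
    exact hy z (h (Set.mem_biUnion (show u ∈ Gam1 P u from fun _ h => h) hz))
  · intro h z hz
    rcases Set.mem_iUnion₂.1 hz with ⟨w, hw, hzw⟩
    rw [← hC]
    intro y hy
    have hu2 : u ∈ pol2 P (pol1 P {x | diaDual P R y x}) := by
      rw [hS y]; exact h y hy
    have hw' : w ∈ {x | diaDual P R y x} := by
      rw [← hS y]
      intro t ht
      have : t ∈ pol1 P {u} := fun x hx => by cases hx; exact hu2 t ht
      exact hw this w rfl
    exact hw' z hzw

end Aux


/-- if R⋄ is smooth then G(C) = {u | ◇|(Γu) ⊆ C} is stable for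
stable C, and ⋄ and G form a residuated pair on stable sets. -/
theorem stmt3 {Z1 Zd : Type*} (P : Z1 → Zd → Prop) (R : Z1 → Z1 → Prop)
    (hS : diaSmooth P R) :
    (∀ C : Set Z1, stab P C → stab P {u | diaImg R (Gam1 P u) ⊆ C}) ∧
    (∀ A C : Set Z1, stab P A → stab P C →
      (diaOp P R A ⊆ C ↔ A ⊆ {u | diaImg R (Gam1 P u) ⊆ C})) := by
  have main : ∀ C : Set Z1, stab P C → stab P {u | diaImg R (Gam1 P u) ⊆ C} := by
    intro C hC
    apply Set.Subset.antisymm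
    · intro u hu
      rw [Set.mem_setOf_eq, key P hS hC]
      intro y hy
      have hsub : {u | diaImg R (Gam1 P u) ⊆ C} ⊆ {x | diaDual P R y x} := by
        intro v hv
        exact ((key P hS hC v).1 hv) y hy
      have : cl1 P {u | diaImg R (Gam1 P u) ⊆ C} ⊆ {x | diaDual P R y x} :=
        cl1_min P (hS y) hsub
      exact this hu
    · exact subset_cl1 P _
  refine ⟨main, ?_⟩
  intro A C _ hC
  constructor
  · intro h u hu
    rw [Set.mem_setOf_eq, key P hS hC]
    intro y hy z hz
    have : z ∈ diaOp P R A := subset_cl1 P _ (Set.mem_biUnion hu hz)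
    exact hy z (h this)
  · intro h
    apply cl1_min P hC
    intro z hz
    rcases Set.mem_iUnion₂.1 hz with ⟨x, hx, hzx⟩
    exact h hx (Set.mem_biUnion (show x ∈ Gam1 P x from fun _ h => h) hzx)
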